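/- arXiv:math/0406003 — 5 statements merged into one kernel-verified Lean document; each statement's English description precedes it below -/
import Mathlib

section
/- Assume V is finite and nonempty, E is strongly connected, and λ is a multiplier function on V. Then for every L > 0: there exists a cycle c of some length n ≥ 1 with cycle multiplier ∏_{i<n} λ(c i) < L^n if and only if there is no family of consistent handicaps for L. -/
set_option linter.unusedSectionVars false
set_option linter.unusedVariables false
set_option maxHeartbeats 1000000

/-- `c` is a cycle of length `n` in the directed graph with edge relation `E`. -/
def IsCycle {V : Type*} (E : V → V → Prop) (n : ℕ) (c : Fin (n + 1) → V) : Prop :=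
  c (Fin.last n) = c 0 ∧ ∀ i : Fin n, E (c i.castSucc) (c i.succ)

/-- The cycle multiplier of a cycle of length `n`. -/
def cycleMult {V : Type*} (lam : V → ℝ) (n : ℕ) (c : Fin (n + 1) → V) : ℝ :=
  ∏ i : Fin n, lam (c i.castSucc)

namespace BadCycleAux

variable {V : Type*} [Fintype V] [Nonempty V]

/-- weight of a walk of length `m` -/
noncomputable def wgt (lam : V → ℝ) (L : ℝ) (m : ℕ) (c : ℕ → V) : ℝ :=
  ∏ i ∈ Finset.range m, (L / lam (c i))

lemma wgt_pos {lam : V → ℝ} (hlam : ∀ v, 0 < lam v) {L : ℝ} (hL : 0 < L)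
    (m : ℕ) (c : ℕ → V) : 0 < wgt lam L m c :=
  Finset.prod_pos fun i _ => div_pos hL (hlam _)

/-- Any walk can be shortened to length at most `card V` without decreasing the weight,
assuming all cycles have multiplier at least `L ^ n`. -/
lemma shorten (E : V → V → Prop) {lam : V → ℝ} (hlam : ∀ v, 0 < lam v)
    {L : ℝ} (hL : 0 < L)
    (hcyc : ∀ n : ℕ, 1 ≤ n → ∀ c : Fin (n + 1) → V, IsCycle E n c → L ^ n ≤ cycleMult lam n c) :
    ∀ m (c : ℕ → V), (∀ i < m, E (c i) (c (i + 1))) →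
      ∃ m' ≤ Fintype.card V, ∃ c' : ℕ → V, c' 0 = c 0 ∧ c' m' = c m ∧
        (∀ i < m', E (c' i) (c' (i + 1))) ∧ wgt lam L m c ≤ wgt lam L m' c' := by
  intro m
  induction m using Nat.strong_induction_on with
  | _ m IH =>
    intro c hc
    by_cases hm : m ≤ Fintype.card V
    · exact ⟨m, hm, c, rfl, rfl, hc, le_refl _⟩
    · push_neg at hm
      -- pigeonhole: two equal vertices among c 0, ..., c (card V)
      obtain ⟨x, y, hxy, hcxy⟩ := Fintype.exists_ne_map_eq_of_card_lt
        (fun t : Fin (Fintype.card V + 1) => c t)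
        (by simp)
      -- wlog x < y
      obtain ⟨i, j, hij, hjm, hcij⟩ :
          ∃ i j : ℕ, i < j ∧ j ≤ m ∧ c i = c j := by
        rcases lt_or_gt_of_ne hxy with h | h
        · exact ⟨x, y, h, le_trans (Nat.le_of_lt_succ y.isLt) hm.le, hcxy⟩
        · exact ⟨y, x, h, le_trans (Nat.le_of_lt_succ x.isLt) hm.le, hcxy.symm⟩
      set d := j - i with hd
      have hd1 : 1 ≤ d := by omega
      have hid : i + d = j := by omega
      set m' := m - d with hm'
      have him' : i ≤ m' := by omega
      have hm'd : m' + d = m := by omega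
      set c' : ℕ → V := fun k => if k < i then c k else c (k + d) with hc'
      have hc'lo : ∀ k ≤ i, c' k = c k := by
        intro k hk
        rcases eq_or_lt_of_le hk with rfl | hk
        · simp only [hc', lt_irrefl, if_false, hid, ← hcij]
        · simp [hc', hk]
      have hc'hi : ∀ k, i ≤ k → c' k = c (k + d) := by
        intro k hk; simp [hc', Nat.not_lt.mpr hk]
      have hw0 : c' 0 = c 0 := hc'lo 0 (Nat.zero_le i)
      have hwm : c' m' = c m := by rw [hc'hi m' him', hm'd]
      have hedge : ∀ k < m', E (c' k) (c' (k + 1)) := by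
        intro k hk
        rcases Nat.lt_or_ge k i with h | h
        · rw [hc'lo k h.le, hc'lo (k + 1) h]
          exact hc k (by omega)
        · rw [hc'hi k h, hc'hi (k + 1) (by omega)]
          have : k + 1 + d = (k + d) + 1 := by omega
          rw [this]
          exact hc (k + d) (by omega)
      -- the spliced-out cycle
      set cc : Fin (d + 1) → V := fun t => c (i + t.val) with hcc
      have hcycle : IsCycle E d cc := by
        constructor
        · simp only [hcc, Fin.val_last, Fin.val_zero, hid, Nat.add_zero, hcij]
        · intro t
          simp only [hcc, Fin.coe_castSucc, Fin.val_succ]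
          have : i + (t.val + 1) = (i + t.val) + 1 := by omega
          rw [this]
          exact hc (i + t.val) (by omega)
      have hP : L ^ d ≤ ∏ t : Fin d, lam (c (i + t.val)) := by
        have := hcyc d hd1 cc hcycle
        simpa [cycleMult, hcc] using this
      have hPpos : 0 < ∏ t : Fin d, lam (c (i + t.val)) :=
        Finset.prod_pos fun t _ => hlam _
      -- the middle block of the weight is at most 1
      have hB : (∏ k ∈ Finset.Ico i j, (L / lam (c k))) ≤ 1 := by
        have h1 : (∏ k ∈ Finset.Ico i j, (L / lam (c k)))
            = ∏ t ∈ Finset.range d, (L / lam (c (i + t))) := by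
          rw [Finset.prod_Ico_eq_prod_range]
        have h2 : (∏ t ∈ Finset.range d, (L / lam (c (i + t))))
            = L ^ d / ∏ t : Fin d, lam (c (i + t.val)) := by
          rw [← Fin.prod_univ_eq_prod_range (fun t => L / lam (c (i + t))) d]
          rw [Finset.prod_div_distrib, Finset.prod_const, Finset.card_univ, Fintype.card_fin]
        rw [h1, h2]
        exact div_le_one_of_le₀ hP hPpos.le
      -- weight comparison
      have hsplit : wgt lam L m c
          = (∏ k ∈ Finset.range i, (L / lam (c k))) *
            (∏ k ∈ Finset.Ico i j, (L / lam (c k))) *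
            (∏ k ∈ Finset.Ico j m, (L / lam (c k))) := by
        unfold wgt
        rw [Finset.range_eq_Ico,
          ← Finset.prod_Ico_consecutive _ (Nat.zero_le j) (by omega : j ≤ m),
          ← Finset.prod_Ico_consecutive _ (Nat.zero_le i) hij.le,
          ← Finset.range_eq_Ico]
      have hsplit' : wgt lam L m' c'
          = (∏ k ∈ Finset.range i, (L / lam (c k))) *
            (∏ k ∈ Finset.Ico j m, (L / lam (c k))) := by
        unfold wgt
        rw [Finset.range_eq_Ico,
          ← Finset.prod_Ico_consecutive _ (Nat.zero_le i) him',
          ← Finset.range_eq_Ico]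
        congr 1
        · exact Finset.prod_congr rfl fun k hk => by
            rw [hc'lo k (Finset.mem_range.mp hk).le]
        · rw [Finset.prod_Ico_eq_prod_range, Finset.prod_Ico_eq_prod_range]
          have hlen : m' - i = m - j := by omega
          rw [hlen]
          refine Finset.prod_congr rfl fun t _ => ?_
          rw [hc'hi (i + t) (Nat.le_add_right i t)]
          have harg : i + t + d = j + t := by omega
          rw [harg]
      have hApos : 0 < ∏ k ∈ Finset.range i, (L / lam (c k)) :=
        Finset.prod_pos fun k _ => div_pos hL (hlam _)
      have hCpos : 0 < ∏ k ∈ Finset.Ico j m, (L / lam (c k)) :=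
        Finset.prod_pos fun k _ => div_pos hL (hlam _)
      have hBpos : 0 < ∏ k ∈ Finset.Ico i j, (L / lam (c k)) :=
        Finset.prod_pos fun k _ => div_pos hL (hlam _)
      have hle : wgt lam L m c ≤ wgt lam L m' c' := by
        rw [hsplit, hsplit']
        nlinarith [hApos, hCpos, hBpos, hB, mul_pos hApos hCpos]
      obtain ⟨m'', hm'', c'', h0, hend, hedge'', hw⟩ := IH m' (by omega) c' hedge
      exact ⟨m'', hm'', c'', by rw [h0, hw0], by rw [hend, hwm], hedge'', hle.trans hw⟩

/-- Converting `ReflTransGen` into a walk. -/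
lemma exists_walk {E : V → V → Prop} {u v : V} (h : Relation.ReflTransGen E u v) :
    ∃ m, ∃ c : ℕ → V, c 0 = u ∧ c m = v ∧ ∀ i < m, E (c i) (c (i + 1)) := by
  induction h with
  | refl => exact ⟨0, fun _ => u, rfl, rfl, by omega⟩
  | @tail b w hab hbc IH =>
    obtain ⟨m, c, h0, hm, he⟩ := IH
    refine ⟨m + 1, fun k => if k ≤ m then c k else w, by simp [h0], by simp, ?_⟩
    intro i hi
    rcases Nat.lt_or_ge i m with h | h
    · simp only [if_pos (Nat.le_of_lt h), if_pos (by omega : i + 1 ≤ m)]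
      exact he i h
    · have hieq : i = m := by omega
      subst hieq
      simp only [if_pos (le_refl i), if_neg (by omega : ¬ (i + 1 ≤ i))]
      rw [hm]
      exact hbc

end BadCycleAux

open BadCycleAux in
/-- There is a cycle of some length `n ≥ 1` with cycle multiplier less than
`L ^ n` if and only if there is no family of consistent handicaps for `L`. -/
theorem bad_cycle_iff_no_consistent_handicaps
    {V : Type*} [Fintype V] [Nonempty V]
    (E : V → V → Prop) (hsc : ∀ u v : V, Relation.ReflTransGen E u v)
    (lam : V → ℝ) (hlam : ∀ v, 0 < lam v)
    (L : ℝ) (hL : 0 < L) :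
    (∃ n : ℕ, 1 ≤ n ∧ ∃ c : Fin (n + 1) → V,
        IsCycle E n c ∧ cycleMult lam n c < L ^ n) ↔
      ¬ ∃ φ : V → ℝ, (∀ v, 0 < φ v) ∧ ∀ k j, E k j → φ j * lam k ≥ L * φ k := by
  constructor
  · rintro ⟨n, hn, c, ⟨hclose, hedges⟩, hlt⟩ ⟨φ, hφpos, hφ⟩
    have key : ∀ i : Fin n, L * φ (c i.castSucc) ≤ φ (c i.succ) * lam (c i.castSucc) :=
      fun i => hφ _ _ (hedges i)
    have hprod : (∏ i : Fin n, (L * φ (c i.castSucc)))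
        ≤ ∏ i : Fin n, (φ (c i.succ) * lam (c i.castSucc)) :=
      Finset.prod_le_prod (fun i _ => (mul_pos hL (hφpos _)).le) (fun i _ => key i)
    have hshift : (∏ i : Fin n, φ (c i.succ)) = ∏ i : Fin n, φ (c i.castSucc) := by
      have h1 := Fin.prod_univ_succ (fun i : Fin (n + 1) => φ (c i))
      have h2 := Fin.prod_univ_castSucc (fun i : Fin (n + 1) => φ (c i))
      rw [h1, hclose] at h2
      have hc0 : φ (c 0) ≠ 0 := (hφpos _).ne'
      exact mul_left_cancel₀ hc0 (h2.trans (mul_comm _ _))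
    have hPpos : 0 < ∏ i : Fin n, φ (c i.castSucc) :=
      Finset.prod_pos fun i _ => hφpos _
    rw [Finset.prod_mul_distrib, Finset.prod_mul_distrib, Finset.prod_const,
      Finset.card_univ, Fintype.card_fin, hshift] at hprod
    have hfin : L ^ n ≤ cycleMult lam n c := by
      unfold cycleMult
      nlinarith [hprod, hPpos]
    linarith
  · intro hno
    by_contra hnocyc
    push_neg at hnocyc
    apply hno
    have hcyc : ∀ n : ℕ, 1 ≤ n → ∀ c : Fin (n + 1) → V, IsCycle E n c →
        L ^ n ≤ cycleMult lam n c := fun n hn c hc => hnocyc n hn c hc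
    classical
    set v0 : V := Classical.arbitrary V with hv0
    set N := Fintype.card V with hN
    -- set of weights of short walks from v0 to v
    set S : V → Set ℝ := fun v => { x | ∃ m ≤ N, ∃ c : ℕ → V, c 0 = v0 ∧ c m = v ∧
      (∀ i < m, E (c i) (c (i + 1))) ∧ x = wgt lam L m c } with hS
    have hfin : ∀ v, (S v).Finite := by
      intro v
      apply Set.Finite.subset (Set.finite_range
        (fun p : Fin (N + 1) × (Fin (N + 1) → V) =>
          ∏ i : Fin p.1.val, (L / lam (p.2 (Fin.castLE (Nat.le_succ_of_le p.1.is_le) i)))))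
      rintro x ⟨m, hmN, c, h0, hm, he, rfl⟩
      refine ⟨(⟨m, by omega⟩, fun t : Fin (N + 1) => c t.val), ?_⟩
      simp only [wgt]
      rw [← Fin.prod_univ_eq_prod_range (fun i => L / lam (c i)) m]
      rfl
    have hne : ∀ v, (S v).Nonempty := by
      intro v
      obtain ⟨m, c, h0, hm, he⟩ := exists_walk (hsc v0 v)
      obtain ⟨m', hm', c', h0', hm'', he', _⟩ := shorten E hlam hL hcyc m c he
      exact ⟨wgt lam L m' c', m', hm', c', by rw [h0', h0], by rw [hm'', hm], he', rfl⟩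
    have hmem : ∀ v, sSup (S v) ∈ S v := fun v => (hne v).csSup_mem (hfin v)
    have hpos : ∀ v, 0 < sSup (S v) := by
      intro v
      obtain ⟨m, _, c, _, _, _, hx⟩ := hmem v
      rw [hx]
      exact wgt_pos hlam hL m c
    have hub : ∀ v m (c : ℕ → V), c 0 = v0 → c m = v → (∀ i < m, E (c i) (c (i + 1))) →
        wgt lam L m c ≤ sSup (S v) := by
      intro v m c h0 hm he
      obtain ⟨m', hm', c', h0', hm'', he', hw⟩ := shorten E hlam hL hcyc m c he
      exact hw.trans (le_csSup (hfin v).bddAbove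
        ⟨m', hm', c', by rw [h0', h0], by rw [hm'', hm], he', rfl⟩)
    refine ⟨fun v => sSup (S v), hpos, ?_⟩
    intro k j hkj
    obtain ⟨m, hmN, c, h0, hmk, he, hx⟩ := hmem k
    set c' : ℕ → V := fun t => if t ≤ m then c t else j with hc'
    have h0' : c' 0 = v0 := by simp [hc', h0]
    have hm' : c' (m + 1) = j := by simp [hc']
    have he' : ∀ i < m + 1, E (c' i) (c' (i + 1)) := by
      intro i hi
      rcases Nat.lt_or_ge i m with h | h
      · simp only [hc', if_pos (Nat.le_of_lt h), if_pos (by omega : i + 1 ≤ m)]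
        exact he i h
      · have hieq : i = m := by omega
        subst hieq
        simp only [hc', if_pos (le_refl i), if_neg (by omega : ¬ (i + 1 ≤ i))]
        rw [hmk]
        exact hkj
    have hw : wgt lam L (m + 1) c' = wgt lam L m c * (L / lam k) := by
      unfold wgt
      rw [Finset.prod_range_succ]
      congr 1
      · exact Finset.prod_congr rfl fun t ht => by
          simp [hc', (Finset.mem_range.mp ht).le]
      · simp [hc', hmk]
    have hkey := hub j (m + 1) c' h0' hm' he'
    rw [hw, ← hx] at hkey
    have hlk := hlam k
    calc L * sSup (S k) = (sSup (S k) * (L / lam k)) * lam k := by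
          field_simp
      _ ≤ sSup (S j) * lam k := mul_le_mul_of_nonneg_right hkey hlk.le
end

section
/- Assume V is finite and nonempty, E is strongly connected, and λ is a multiplier function on V. Suppose 𝓛 is the minimum of the average cycle multipliers over all simple cycles; that is, some simple cycle has average cycle multiplier equal to 𝓛, and every simple cycle has average cycle multiplier at least 𝓛. Then for every L > 0: a family of consistent handicaps for L exists if and only if L ≤ 𝓛. -/
/-- The cycle `c` of length `n` is simple, i.e. its first `n` vertices are
pairwise distinct. -/
def IsSimpleCycle {V : Type*} (n : ℕ) (c : Fin (n + 1) → V) : Prop :=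
  ∀ i j : Fin n, c i.castSucc = c j.castSucc → i = j

open scoped Pointwise

theorem Fin.prod_succ_eq_prod_castSucc_of_last_eq {M : Type*} [CommMonoid M] {n : ℕ}
    (f : Fin (n + 1) → M) (h : f (Fin.last n) = f 0) :
    ∏ i : Fin n, f i.succ = ∏ i : Fin n, f i.castSucc := by
  cases n with
  | zero => simp
  | succ n =>
    rw [Fin.prod_univ_castSucc, Fin.prod_univ_succ, Fin.succ_last, h, Fin.castSucc_zero, mul_comm]
    simp only [Fin.succ_castSucc]

section Handicaps

variable {V : Type*} (E : V → V → Prop) (lam : V → ℝ) (L : ℝ)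

def IsConsistentHandicaps (φ : V → ℝ) : Prop :=
  (∀ v, 0 < φ v) ∧ ∀ k j, E k j → L * φ k ≤ φ j * lam k

/-- A simple path ending at `v`, recorded by the list of its vertices before `v`: a product of
weights over this list charges each edge of the path to its tail. -/
def simplePathsTo (v : V) : Set (List V) :=
  {l | (l ++ [v]).Nodup ∧ (l ++ [v]).IsChain E}

variable {E lam L}

lemma cycleMult_pos (hlam : ∀ v, 0 < lam v) (n : ℕ) (c : Fin (n + 1) → V) :
    0 < cycleMult lam n c :=
  Finset.prod_pos fun _ _ => hlam _

theorem IsConsistentHandicaps.pow_le_cycleMult {φ : V → ℝ}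
    (hφ : IsConsistentHandicaps E lam L φ)
    (hL : 0 ≤ L) {n : ℕ} {c : Fin (n + 1) → V} (hc : IsCycle E n c) :
    L ^ n ≤ cycleMult lam n c := by
  have hprod :
      ∏ i : Fin n, L * φ (c i.castSucc) ≤ ∏ i : Fin n, φ (c i.succ) * lam (c i.castSucc) :=
    Finset.prod_le_prod (fun i _ => mul_nonneg hL (hφ.1 _).le) fun i _ => hφ.2 _ _ (hc.2 i)
  have htel : ∏ i : Fin n, φ (c i.succ) = ∏ i : Fin n, φ (c i.castSucc) :=
    Fin.prod_succ_eq_prod_castSucc_of_last_eq (fun i => φ (c i)) (congrArg φ hc.1)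
  rw [Finset.prod_mul_distrib, Finset.prod_mul_distrib, Finset.prod_const, Finset.card_univ,
    Fintype.card_fin, htel] at hprod
  exact le_of_mul_le_mul_right (hprod.trans_eq (mul_comm _ _)) (Finset.prod_pos fun i _ => hφ.1 _)

theorem exists_isSimpleCycle_of_isChain {x : V} {b : List V} (hnd : (x :: b).Nodup)
    (hch : (x :: b ++ [x]).IsChain E) :
    ∃ c : Fin (b.length + 1 + 1) → V, IsCycle E (b.length + 1) c ∧
      IsSimpleCycle (b.length + 1) c ∧ ∀ f : V → ℝ, cycleMult f (b.length + 1) c = ((x :: b).map f).prod := by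
  refine ⟨fun i => (x :: b ++ [x])[i.val]'(by have := i.isLt; simp; omega),
    ⟨by simp, fun i => List.isChain_iff_getElem.1 hch i (by simpa using i.isLt)⟩,
    fun i j hij => ?_, ?_⟩
  · simp only [Fin.val_castSucc] at hij
    rw [List.getElem_append_left i.isLt, List.getElem_append_left j.isLt] at hij
    exact Fin.ext (hnd.getElem_inj_iff.1 hij)
  · intro f
    rw [cycleMult, ← Fin.prod_univ_fun_getElem]
    exact Finset.prod_congr rfl fun i _ => congrArg f (List.getElem_append_left _)

theorem exists_mem_simplePathsTo_of_rel {w : V → ℝ} (hw : ∀ v, 0 ≤ w v)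
    (hcyc : ∀ x b, (x :: b).Nodup → (x :: b ++ [x]).IsChain E → ((x :: b).map w).prod ≤ 1)
    {k j : V} (hkj : E k j) {l : List V} (hl : l ∈ simplePathsTo E k) :
    ∃ l' ∈ simplePathsTo E j, (l.map w).prod * w k ≤ (l'.map w).prod := by
  obtain ⟨hnd, hch⟩ := hl
  have hch' : (l ++ [k] ++ [j]).IsChain E := hch.append (List.isChain_singleton j) (by simp [hkj])
  by_cases hj : j ∈ l ++ [k]
  · obtain ⟨l₁, l₂, hsplit⟩ := List.append_of_mem hj
    rw [hsplit] at hnd hch'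
    refine ⟨l₁, ⟨?_, ?_⟩, ?_⟩
    · exact hnd.sublist (by simp)
    · exact hch'.prefix (by simp)
    · calc (l.map w).prod * w k = ((l ++ [k]).map w).prod := by simp
        _ = (l₁.map w).prod * ((j :: l₂).map w).prod := by rw [hsplit]; simp
        _ ≤ (l₁.map w).prod * 1 :=
          mul_le_mul_of_nonneg_left (hcyc j l₂ (hnd.sublist (by simp)) (hch'.suffix (by simp)))
            (List.prod_nonneg (by simpa using fun v _ => hw v))
        _ = (l₁.map w).prod := mul_one _
  · refine ⟨l ++ [k], ⟨?_, hch'⟩, by simp⟩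
    refine List.nodup_append.2 ⟨hnd, List.nodup_singleton j, fun a ha b hb => ?_⟩
    rw [List.mem_singleton] at hb
    subst hb
    rintro rfl
    exact hj ha

theorem exists_potential_of_prod_le_one [Finite V] {w : V → ℝ} (hw : ∀ v, 0 ≤ w v)
    (hcyc : ∀ x b, (x :: b).Nodup → (x :: b ++ [x]).IsChain E → ((x :: b).map w).prod ≤ 1) :
    ∃ φ : V → ℝ, (∀ v, 1 ≤ φ v) ∧ ∀ k j, E k j → w k * φ k ≤ φ j := by
  classical
  have := Fintype.ofFinite V
  set S : V → Set ℝ := fun v => (fun l => (l.map w).prod) '' simplePathsTo E v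
  have hS_one : ∀ v, 1 ∈ S v := fun v => ⟨[], by simp [simplePathsTo], by simp⟩
  have h_nodup_finite : {l : List V | l.Nodup}.Finite :=
    Finite.of_fintype {l : List V // l.Nodup}
  have hS_bdd : ∀ v, BddAbove (S v) := fun v =>
    ((h_nodup_finite.subset fun l hl =>
      hl.1.sublist (List.sublist_append_left _ _)).image _).bddAbove
  refine ⟨fun v => sSup (S v), fun v => le_csSup (hS_bdd v) (hS_one v), fun k j hkj => ?_⟩
  rw [← smul_eq_mul, ← Real.sSup_smul_of_nonneg (hw k)]
  refine csSup_le ((Set.nonempty_of_mem (hS_one k)).smul_set) ?_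
  rintro _ ⟨_, ⟨l, hl, rfl⟩, rfl⟩
  obtain ⟨l', hl', hle⟩ := exists_mem_simplePathsTo_of_rel hw hcyc hkj hl
  exact (mul_comm _ _).trans_le (hle.trans (le_csSup (hS_bdd j) ⟨l', hl', rfl⟩))

theorem exists_isConsistentHandicaps_of_pow_le_cycleMult [Finite V] (hlam : ∀ v, 0 < lam v)
    (hL : 0 ≤ L)
    (hcyc : ∀ n, 1 ≤ n → ∀ c : Fin (n + 1) → V, IsCycle E n c → IsSimpleCycle n c →
      L ^ n ≤ cycleMult lam n c) :
    ∃ φ, IsConsistentHandicaps E lam L φ := by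
  have hw_cyc : ∀ x b, (x :: b).Nodup → (x :: b ++ [x]).IsChain E →
      ((x :: b).map fun v => L / lam v).prod ≤ 1 := by
    intro x b hnd hch
    obtain ⟨c, hc, hs, hmult⟩ := exists_isSimpleCycle_of_isChain hnd hch
    rw [← hmult, cycleMult, Finset.prod_div_distrib, Finset.prod_const, Finset.card_univ,
      Fintype.card_fin]
    exact (div_le_one (cycleMult_pos hlam _ c)).2 (hcyc _ (Nat.le_add_left 1 _) c hc hs)
  obtain ⟨φ, hφ_one, hφ⟩ :=
    exists_potential_of_prod_le_one (fun v => div_nonneg hL (hlam v).le) hw_cyc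
  refine ⟨φ, fun v => one_pos.trans_le (hφ_one v), fun k j hkj => ?_⟩
  have := hφ k j hkj
  rwa [div_mul_eq_mul_div, div_le_iff₀ (hlam k)] at this

end Handicaps

theorem le_rpow_one_div_iff {x y : ℝ} (hx : 0 ≤ x) (hy : 0 ≤ y) {n : ℕ} (hn : n ≠ 0) :
    x ≤ y ^ ((1 : ℝ) / n) ↔ x ^ n ≤ y := by
  rw [one_div, Real.le_rpow_inv_iff_of_pos hx hy (by positivity), Real.rpow_natCast]

theorem consistent_handicaps_iff_le_min_avg_cycle_multiplier_general
    {V : Type*} [Fintype V]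
    (E : V → V → Prop)
    (lam : V → ℝ) (hlam : ∀ v, 0 < lam v)
    (𝓛 : ℝ)
    (hmin_ex : ∃ n : ℕ, 1 ≤ n ∧ ∃ c : Fin (n + 1) → V,
        IsCycle E n c ∧ IsSimpleCycle n c ∧
        (cycleMult lam n c) ^ ((1 : ℝ) / n) = 𝓛)
    (hmin_le : ∀ n : ℕ, 1 ≤ n → ∀ c : Fin (n + 1) → V,
        IsCycle E n c → IsSimpleCycle n c →
        𝓛 ≤ (cycleMult lam n c) ^ ((1 : ℝ) / n))
    (L : ℝ) (hL : 0 < L) :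
    (∃ φ : V → ℝ, (∀ v, 0 < φ v) ∧ ∀ k j, E k j → φ j * lam k ≥ L * φ k) ↔ L ≤ 𝓛 := by
  have h_avg_iff : ∀ n, 1 ≤ n → ∀ c : Fin (n + 1) → V,
      L ≤ cycleMult lam n c ^ ((1 : ℝ) / n) ↔ L ^ n ≤ cycleMult lam n c := fun n hn c =>
    le_rpow_one_div_iff hL.le (cycleMult_pos hlam n c).le (by omega)
  obtain ⟨n₀, hn₀, c₀, hc₀, -, rfl⟩ := hmin_ex
  constructor
  · rintro ⟨φ, hφ⟩
    exact (h_avg_iff n₀ hn₀ c₀).2 (IsConsistentHandicaps.pow_le_cycleMult hφ hL.le hc₀)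
  · intro hL_le
    exact exists_isConsistentHandicaps_of_pow_le_cycleMult hlam hL.le fun n hn c hc hs =>
      (h_avg_iff n hn c).1 (hL_le.trans (hmin_le n hn c hc hs))

/-- If `𝓛` is the minimum average cycle multiplier over all simple cycles,
then for every `L > 0`, consistent handicaps for `L` exist iff `L ≤ 𝓛`. -/
theorem consistent_handicaps_iff_le_min_avg_cycle_multiplier
    {V : Type*} [Fintype V] [Nonempty V]
    (E : V → V → Prop) (hsc : ∀ u v : V, Relation.ReflTransGen E u v)
    (lam : V → ℝ) (hlam : ∀ v, 0 < lam v)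
    (𝓛 : ℝ)
    (hmin_ex : ∃ n : ℕ, 1 ≤ n ∧ ∃ c : Fin (n + 1) → V,
        IsCycle E n c ∧ IsSimpleCycle n c ∧
        (cycleMult lam n c) ^ ((1 : ℝ) / n) = 𝓛)
    (hmin_le : ∀ n : ℕ, 1 ≤ n → ∀ c : Fin (n + 1) → V,
        IsCycle E n c → IsSimpleCycle n c →
        𝓛 ≤ (cycleMult lam n c) ^ ((1 : ℝ) / n))
    (L : ℝ) (hL : 0 < L) :
    (∃ φ : V → ℝ, (∀ v, 0 < φ v) ∧ ∀ k j, E k j → φ j * lam k ≥ L * φ k) ↔ L ≤ 𝓛 :=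
  consistent_handicaps_iff_le_min_avg_cycle_multiplier_general E lam hlam 𝓛 hmin_ex hmin_le L hL
end

section
/- Assume V is finite, E is an edge relation on V, λ is a multiplier function, and L > 0. If every simple cycle of every length m satisfies ∏_{i<m} λ(c i) ≥ L^m, then every cycle (not necessarily simple) of every length n satisfies ∏_{i<n} λ(c i) ≥ L^n. -/
/-!
A cycle that is not simple visits some vertex twice, at times `i < i + k < n`. It then splits
into the closed walk it performs between these two visits, of length `k`, and the closed walk
obtained by cutting that detour out, of length `n - k`. Both are shorter, their multipliers
multiply to that of the original cycle, and `L ^ n = L ^ k * L ^ (n - k)`, so strong induction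
on the length reduces everything to simple cycles.
-/

open Finset

-- Cycles re-indexed by `ℕ`, so that cutting and shifting them needs no `Fin` casts.
def IsClosedWalk {V : Type*} (E : V → V → Prop) (n : ℕ) (f : ℕ → V) : Prop :=
  f n = f 0 ∧ ∀ t < n, E (f t) (f (t + 1))

def excise {α : Type*} (f : ℕ → α) (i k : ℕ) : ℕ → α :=
  fun t => if t < i then f t else f (t + k)

theorem prod_range_eq_prod_segment_mul_prod_excise {α M : Type*} [CommMonoid M] (g : α → M)
    (f : ℕ → α) {n i k : ℕ} (hkn : i + k ≤ n) :
    ∏ t ∈ range n, g (f t)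
      = (∏ t ∈ range k, g (f (i + t))) * ∏ t ∈ range (n - k), g (excise f i k t) := by
  have hexcise : ∏ t ∈ range (n - k), g (excise f i k t)
      = (∏ t ∈ range i, g (f t)) * ∏ t ∈ Ico (i + k) n, g (f t) := by
    rw [← prod_range_mul_prod_Ico _ (by omega : i ≤ n - k)]
    congr 1
    · exact prod_congr rfl fun t ht => congrArg g (if_pos (mem_range.1 ht))
    · have hshift := prod_Ico_add' (g ∘ f) i (n - k) k
      rw [Nat.sub_add_cancel (by omega : k ≤ n)] at hshift
      refine (prod_congr rfl fun t ht => congrArg g (if_neg ?_)).trans hshift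
      simp only [mem_Ico] at ht
      omega
  have hsegment : ∏ t ∈ range k, g (f (i + t)) = ∏ t ∈ Ico i (i + k), g (f t) := by
    rw [prod_Ico_eq_prod_range, Nat.add_sub_cancel_left]
  rw [hexcise, hsegment, ← prod_range_mul_prod_Ico _ (by omega : i ≤ n),
    ← prod_Ico_consecutive _ (by omega : i ≤ i + k) hkn]
  ac_rfl

namespace IsClosedWalk

variable {V : Type*} {E : V → V → Prop} {f : ℕ → V} {n i k : ℕ}

theorem segment (h : IsClosedWalk E n f) (hkn : i + k ≤ n) (heq : f i = f (i + k)) :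
    IsClosedWalk E k (fun t => f (i + t)) :=
  ⟨heq.symm, fun t ht => h.2 (i + t) (by omega)⟩

theorem excise (h : IsClosedWalk E n f) (hkn : i + k ≤ n) (heq : f i = f (i + k)) :
    IsClosedWalk E (n - k) (excise f i k) := by
  refine ⟨?_, fun t ht => ?_⟩ <;> simp only [_root_.excise]
  · rw [if_neg (by omega), Nat.sub_add_cancel (by omega), h.1]
    split_ifs with hi
    · rfl
    · simpa [Nat.eq_zero_of_not_pos hi] using heq
  · rcases lt_trichotomy (t + 1) i with hti | hti | hti
    · rw [if_pos (by omega), if_pos hti]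
      exact h.2 t (by omega)
    · rw [if_pos (by omega), if_neg (by omega), hti, ← heq, ← hti]
      exact h.2 t (by omega)
    · rw [if_neg (by omega), if_neg (by omega), Nat.add_right_comm]
      exact h.2 (t + k) (by omega)

end IsClosedWalk

theorem pow_le_prod_of_isClosedWalk {V R : Type*} [CommSemiring R] [PartialOrder R]
    [IsOrderedRing R] {E : V → V → Prop} {w : V → R} {L : R} (hL : 0 ≤ L)
    (hsimple : ∀ m, 1 ≤ m → ∀ f : ℕ → V, IsClosedWalk E m f → Set.InjOn f (Set.Iio m) →
      L ^ m ≤ ∏ t ∈ range m, w (f t)) :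
    ∀ n, 1 ≤ n → ∀ f : ℕ → V, IsClosedWalk E n f → L ^ n ≤ ∏ t ∈ range n, w (f t) := by
  intro n
  induction n using Nat.strong_induction_on with
  | _ n ih =>
  intro hn f hf
  by_cases hinj : Set.InjOn f (Set.Iio n)
  · exact hsimple n hn f hf hinj
  obtain ⟨i, k, hk, hkn, heq⟩ : ∃ i k, 0 < k ∧ i + k < n ∧ f i = f (i + k) := by
    simp only [Set.InjOn, Set.mem_Iio, not_forall] at hinj
    obtain ⟨a, ha, b, hb, hab, hne⟩ := hinj
    rcases lt_or_gt_of_ne hne with h | h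
    · exact ⟨a, b - a, by omega, by omega, by rwa [Nat.add_sub_cancel' h.le]⟩
    · exact ⟨b, a - b, by omega, by omega, by rw [Nat.add_sub_cancel' h.le]; exact hab.symm⟩
  have hloop := ih k (by omega) hk _ (hf.segment hkn.le heq)
  have hrest := ih (n - k) (by omega) (by omega) _ (hf.excise hkn.le heq)
  calc L ^ n = L ^ k * L ^ (n - k) := by rw [← pow_add, Nat.add_sub_cancel' (by omega)]
    _ ≤ (∏ t ∈ range k, w (f (i + t))) * ∏ t ∈ range (n - k), w (excise f i k t) :=
        mul_le_mul hloop hrest (pow_nonneg hL _) ((pow_nonneg hL _).trans hloop)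
    _ = ∏ t ∈ range n, w (f t) := by
        rw [prod_range_eq_prod_segment_mul_prod_excise w f hkn.le]

section FinCycles

variable {V : Type*} {E : V → V → Prop} {n : ℕ} {f : ℕ → V}

theorem exists_eq_comp_val (c : Fin (n + 1) → V) : ∃ f : ℕ → V, c = fun t : Fin (n + 1) => f t :=
  ⟨fun s => c (Fin.clamp s n), funext fun t => congrArg c (Fin.ext (min_eq_left t.is_le).symm)⟩

theorem isCycle_iff_isClosedWalk :
    IsCycle E n (fun t : Fin (n + 1) => f t) ↔ IsClosedWalk E n f := by
  simp [IsCycle, IsClosedWalk, Fin.forall_iff]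

theorem isSimpleCycle_iff_injOn :
    IsSimpleCycle n (fun t : Fin (n + 1) => f t) ↔ Set.InjOn f (Set.Iio n) := by
  simp [IsSimpleCycle, Set.InjOn, Fin.forall_iff, Fin.ext_iff]

theorem cycleMult_eq_prod_range (lam : V → ℝ) :
    cycleMult lam n (fun t : Fin (n + 1) => f t) = ∏ t ∈ range n, lam (f t) :=
  Fin.prod_univ_eq_prod_range (lam ∘ f) n

end FinCycles

theorem all_cycles_ge_of_simple_cycles_ge_general
    {V : Type*}
    (E : V → V → Prop)
    (lam : V → ℝ)
    (L : ℝ) (hL : 0 < L)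
    (hsimple : ∀ m : ℕ, 1 ≤ m → ∀ c : Fin (m + 1) → V,
        IsCycle E m c → IsSimpleCycle m c → L ^ m ≤ cycleMult lam m c) :
    ∀ n : ℕ, 1 ≤ n → ∀ c : Fin (n + 1) → V,
      IsCycle E n c → L ^ n ≤ cycleMult lam n c := by
  intro n hn c hc
  obtain ⟨f, rfl⟩ := exists_eq_comp_val c
  rw [cycleMult_eq_prod_range]
  refine pow_le_prod_of_isClosedWalk hL.le (fun m hm g hg hinj => ?_) n hn f
    (isCycle_iff_isClosedWalk.1 hc)
  rw [← cycleMult_eq_prod_range]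
  exact hsimple m hm _ (isCycle_iff_isClosedWalk.2 hg) (isSimpleCycle_iff_injOn.2 hinj)

/-- If every simple cycle of every length `m` has cycle multiplier at least
`L ^ m`, then every (not necessarily simple) cycle of every length `n` has
cycle multiplier at least `L ^ n`. -/
theorem all_cycles_ge_of_simple_cycles_ge
    {V : Type*} [Fintype V]
    (E : V → V → Prop)
    (lam : V → ℝ) (hlam : ∀ v, 0 < lam v)
    (L : ℝ) (hL : 0 < L)
    (hsimple : ∀ m : ℕ, 1 ≤ m → ∀ c : Fin (m + 1) → V,
        IsCycle E m c → IsSimpleCycle m c → L ^ m ≤ cycleMult lam m c) :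
    ∀ n : ℕ, 1 ≤ n → ∀ c : Fin (n + 1) → V,
      IsCycle E n c → L ^ n ≤ cycleMult lam n c :=
  all_cycles_ge_of_simple_cycles_ge_general E lam L hL hsimple
end

section
/- Assume V is finite and nonempty, E is strongly connected, and λ is a multiplier function on V. Suppose 𝓛 is the minimum of the average cycle multipliers over all simple cycles; that is, some simple cycle has average cycle multiplier equal to 𝓛, and every simple cycle has average cycle multiplier at least 𝓛. Let δ > 0 and L₀ be reals with L₀ − δ > 0, suppose there is a simple cycle with average cycle multiplier L₁ satisfying L₁ < L₀, and set L := min{L₁, L₀ − δ}. If there exists a family of consistent handicaps for L, then L ≤ 𝓛 ≤ L₁ and 𝓛 − L ≤ δ. (Thus the Find-L-Cycles procedure certifies box expansion by a constant within δ of the optimal constant 𝓛.) -/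
lemma handicap_cycle_bound {V : Type*} (E : V → V → Prop)
    (lam : V → ℝ) (hlam : ∀ v, 0 < lam v) (L : ℝ) (hL : 0 < L)
    (φ : V → ℝ) (hφpos : ∀ v, 0 < φ v)
    (hedge : ∀ k j, E k j → φ j * lam k ≥ L * φ k)
    (n : ℕ) (hn : 1 ≤ n) (c : Fin (n + 1) → V) (hc : IsCycle E n c) :
    L ≤ (cycleMult lam n c) ^ ((1 : ℝ) / n) := by
  have hprod : ∏ i : Fin n, (L * φ (c i.castSucc)) ≤
      ∏ i : Fin n, (φ (c i.succ) * lam (c i.castSucc)) := by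
    apply Finset.prod_le_prod
    · intro i _; exact (mul_pos hL (hφpos _)).le
    · intro i _; exact hedge _ _ (hc.2 i)
  have hshift : ∏ i : Fin n, φ (c i.succ) = ∏ i : Fin n, φ (c i.castSucc) := by
    have h1 : ∏ i : Fin (n+1), φ (c i) = φ (c 0) * ∏ i : Fin n, φ (c i.succ) :=
      Fin.prod_univ_succ _
    have h2 : ∏ i : Fin (n+1), φ (c i) =
        (∏ i : Fin n, φ (c i.castSucc)) * φ (c (Fin.last n)) :=
      Fin.prod_univ_castSucc _
    rw [hc.1] at h2
    have := h1.symm.trans h2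
    rw [mul_comm] at this
    exact mul_right_cancel₀ (ne_of_gt (hφpos (c 0))) this
  have hP : 0 < ∏ i : Fin n, φ (c i.castSucc) :=
    Finset.prod_pos fun i _ => hφpos _
  have hpow : L ^ n ≤ cycleMult lam n c := by
    have lhs : ∏ i : Fin n, (L * φ (c i.castSucc)) =
        L ^ n * ∏ i : Fin n, φ (c i.castSucc) := by
      rw [Finset.prod_mul_distrib, Finset.prod_const, Finset.card_univ, Fintype.card_fin]
    have rhs : ∏ i : Fin n, (φ (c i.succ) * lam (c i.castSucc)) =
        (∏ i : Fin n, φ (c i.castSucc)) * cycleMult lam n c := by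
      rw [Finset.prod_mul_distrib, hshift]; rfl
    rw [lhs, rhs, mul_comm (∏ i : Fin n, φ (c i.castSucc))] at hprod
    exact le_of_mul_le_mul_right hprod hP
  have hn0 : (n : ℝ) ≠ 0 := Nat.cast_ne_zero.mpr (by omega)
  have : (L ^ n) ^ ((1:ℝ)/n) ≤ (cycleMult lam n c) ^ ((1:ℝ)/n) :=
    Real.rpow_le_rpow (by positivity) hpow (by positivity)
  calc L = (L ^ n) ^ ((1:ℝ)/n) := by
        rw [← Real.rpow_natCast L n, ← Real.rpow_mul hL.le, mul_one_div,
          div_self hn0, Real.rpow_one]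
    _ ≤ _ := this

/-- The Find-L-Cycles procedure certifies box expansion by a constant within
`δ` of the optimal constant `𝓛`. -/
theorem find_L_cycles_approximates_optimal
    {V : Type*} [Fintype V] [Nonempty V]
    (E : V → V → Prop) (hsc : ∀ u v : V, Relation.ReflTransGen E u v)
    (lam : V → ℝ) (hlam : ∀ v, 0 < lam v)
    (𝓛 : ℝ)
    (hmin_ex : ∃ n : ℕ, 1 ≤ n ∧ ∃ c : Fin (n + 1) → V,
        IsCycle E n c ∧ IsSimpleCycle n c ∧
        (cycleMult lam n c) ^ ((1 : ℝ) / n) = 𝓛)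
    (hmin_le : ∀ n : ℕ, 1 ≤ n → ∀ c : Fin (n + 1) → V,
        IsCycle E n c → IsSimpleCycle n c →
        𝓛 ≤ (cycleMult lam n c) ^ ((1 : ℝ) / n))
    (δ L₀ L₁ : ℝ) (hδ : 0 < δ) (hL₀ : 0 < L₀ - δ)
    (hL₁ : ∃ n : ℕ, 1 ≤ n ∧ ∃ c : Fin (n + 1) → V,
        IsCycle E n c ∧ IsSimpleCycle n c ∧
        (cycleMult lam n c) ^ ((1 : ℝ) / n) = L₁)
    (hlt : L₁ < L₀)
    (hφ : ∃ φ : V → ℝ, (∀ v, 0 < φ v) ∧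
        ∀ k j, E k j → φ j * lam k ≥ min L₁ (L₀ - δ) * φ k) :
    min L₁ (L₀ - δ) ≤ 𝓛 ∧ 𝓛 ≤ L₁ ∧ 𝓛 - min L₁ (L₀ - δ) ≤ δ := by
  obtain ⟨n₁, hn₁, c₁, hc₁, hs₁, hL₁eq⟩ := hL₁
  have hL₁pos : 0 < L₁ := by
    rw [← hL₁eq]
    have : 0 < cycleMult lam n₁ c₁ := Finset.prod_pos fun i _ => hlam _
    positivity
  have hLpos : 0 < min L₁ (L₀ - δ) := lt_min hL₁pos hL₀
  obtain ⟨φ, hφpos, hedge⟩ := hφ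
  have h𝓛L₁ : 𝓛 ≤ L₁ := hL₁eq ▸ hmin_le n₁ hn₁ c₁ hc₁ hs₁
  obtain ⟨n, hn, c, hc, hs, h𝓛eq⟩ := hmin_ex
  have hL𝓛 : min L₁ (L₀ - δ) ≤ 𝓛 :=
    h𝓛eq ▸ handicap_cycle_bound E lam hlam _ hLpos φ hφpos hedge n hn c hc
  refine ⟨hL𝓛, h𝓛L₁, ?_⟩
  rcases min_cases L₁ (L₀ - δ) with ⟨h, _⟩ | ⟨h, _⟩ <;> rw [h] <;> linarith
end

section
/- Suppose the boxes and edge set satisfy the δ-edge condition for some δ > 0, and suppose the edge relation E is strongly connected on {1,…,N} (for any two indices there is a finite sequence of edges from one to the other). For each k let λ_k = inf{|f'(z)| : z ∈ B_k}. Suppose that every simple cycle (k_0, k_1, …, k_{n−1}, k_n = k_0) of edges in E satisfies λ_{k_0} · λ_{k_1} ⋯ λ_{k_{n−1}} > 1. Then there exist a constant L > 1 and an infinitely differentiable function ρ : ℂ → ℝ with ρ(z) > 0 for every z ∈ 𝓑, such that for every z ∈ 𝓑 with f(z) ∈ 𝓑 one has ρ(f(z)) · |f'(z)| ≥ L ·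 ρ(z). (If every simple cycle multiplier exceeds one, the map is uniformly expanding on 𝓑 in a smooth conformal metric, hence hyperbolic.) -/
/-- `S` is a closed box in `ℂ` with nonempty interior. -/
def IsBox (S : Set ℂ) : Prop :=
  ∃ a b c d : ℝ, a < b ∧ c < d ∧
    S = {z : ℂ | z.re ∈ Set.Icc a b ∧ z.im ∈ Set.Icc c d}

open List in
private lemma list_exists_dup {α : Type*} : ∀ (m : List α), ¬ m.Nodup →
    ∃ (x : α) (s u t : List α), m = s ++ x :: u ++ x :: t := by
  intro m
  induction m with
  | nil => intro h; exact absurd List.nodup_nil h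
  | cons a m ih =>
    intro h
    rw [List.nodup_cons] at h
    push_neg at h
    by_cases ha : a ∈ m
    · obtain ⟨u, t, rfl⟩ := List.append_of_mem ha
      exact ⟨a, [], u, t, by simp⟩
    · obtain ⟨x, s, u, t, rfl⟩ := ih (h ha)
      exact ⟨x, a :: s, u, t, by simp⟩

private lemma chain'_exists_succ {α : Type*} {R : α → α → Prop} :
    ∀ (t : List α), List.Chain' R t → ∀ x ∈ t.dropLast, ∃ y, R x y := by
  intro t
  induction t with
  | nil => intro _ x hx; simp at hx
  | cons a t ih =>
    intro h x hx
    cases t with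
    | nil => simp at hx
    | cons b t =>
      rw [List.dropLast_cons₂] at hx
      replace h : List.IsChain R (a :: b :: t) := h
      rw [List.isChain_cons_cons] at h
      rcases List.mem_cons.1 hx with rfl | hx
      · exact ⟨b, h.1⟩
      · exact ih h.2 x hx

private lemma prod_map_div {α : Type*} (f : α → ℝ) (L : ℝ) :
    ∀ t : List α, (t.map fun i => f i / L).prod = (t.map f).prod / L ^ t.length := by
  intro t
  induction t with
  | nil => simp
  | cons a t ih =>
    simp only [List.map_cons, List.prod_cons, List.length_cons, ih, pow_succ]
    ring

private lemma rtg_walk {V : Type*} {E : V → V → Prop} {a b : V}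
    (h : Relation.ReflTransGen E a b) :
    a = b ∨ ∃ m : List V, List.Chain E a (m ++ [b]) := by
  induction h with
  | refl => exact Or.inl rfl
  | tail h1 e ih =>
    rename_i x y
    right
    rcases ih with rfl | ⟨m, hm⟩
    · exact ⟨[], by simpa using List.Chain.cons e List.Chain.nil⟩
    · refine ⟨m ++ [x], ?_⟩
      have h1' : List.Chain' E (a :: (m ++ [x])) := hm
      have : List.Chain' E ((a :: (m ++ [x])) ++ [y]) := by
        show List.IsChain E _
        rw [List.isChain_append]
        refine ⟨h1', List.isChain_singleton _, ?_⟩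
        intro p hp q hq
        simp only [List.head?_cons, Option.mem_def, Option.some.injEq] at hq
        have : (a :: (m ++ [x])).getLast? = some x := by
          rw [show a :: (m ++ [x]) = (a :: m) ++ [x] by simp, List.getLast?_concat]
        rw [this, Option.mem_def, Option.some.injEq] at hp
        subst hp; subst hq; exact e
      have h2 : List.Chain' E (a :: ((m ++ [x]) ++ [y])) := by
        simpa [List.append_assoc] using this
      exact h2

private lemma cycle_shorten {V : Type*} {E : V → V → Prop} :
    ∀ (n : ℕ) (k : V) (m : List V), m.length ≤ n → List.Chain E k (m ++ [k]) →
      ∃ m', List.Chain E k (m' ++ [k]) ∧ (k :: m').Nodup := by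
  intro n
  induction n using Nat.strong_induction_on with
  | _ n ih =>
    intro k m hlen hch
    by_cases hnd : (k :: m).Nodup
    · exact ⟨m, hch, hnd⟩
    · obtain ⟨x, s, u, t, hdec⟩ := list_exists_dup _ hnd
      cases s with
      | nil =>
        simp only [List.nil_append, List.cons.injEq] at hdec
        obtain ⟨rfl, rfl⟩ := hdec
        have h1 : List.Chain' E ((k :: u) ++ k :: (t ++ [k])) := by
          have : List.Chain' E (k :: ((u ++ k :: t) ++ [k])) := hch
          simpa [List.append_assoc] using this
        have h2 := (List.isChain_split.1 h1).2
        have h3 : List.Chain E k (t ++ [k]) := h2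
        refine ih t.length ?_ k t le_rfl h3
        have : t.length < (u ++ k :: t).length := by
          simp only [List.length_append, List.length_cons]; omega
        simp only [List.append_eq, List.length_append, List.length_cons] at hlen this ⊢
        omega
      | cons a s' =>
        simp only [List.cons_append, List.cons.injEq] at hdec
        obtain ⟨rfl, rfl⟩ := hdec
        have h1 : List.Chain' E ((k :: s') ++ x :: (u ++ x :: (t ++ [k]))) := by
          have : List.Chain' E (k :: ((s' ++ x :: u ++ x :: t) ++ [k])) := hch
          simpa [List.append_assoc] using this
        have h2 := List.isChain_split.1 h1
        have h3 : List.Chain' E ((x :: u) ++ x :: (t ++ [k])) := by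
          exact h2.2
        have h4 := (List.isChain_split.1 h3).2
        have h5 : List.Chain' E ((k :: s') ++ x :: (t ++ [k])) :=
          List.isChain_split.2 ⟨h2.1, h4⟩
        have h6 : List.Chain E k ((s' ++ x :: t) ++ [k]) := by
          have : List.Chain' E (k :: ((s' ++ x :: t) ++ [k])) := by
            simpa [List.append_assoc] using h5
          exact this
        refine ih (s' ++ x :: t).length ?_ k (s' ++ x :: t) le_rfl h6
        have : (s' ++ x :: t).length < (s' ++ x :: u ++ x :: t).length := by
          simp only [List.length_append, List.length_cons]; omega
        simp only [List.append_eq, List.length_append, List.length_cons] at hlen this ⊢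
        omega

private lemma listCycle_encode {N : ℕ} {E : Fin N → Fin N → Prop} (lam : Fin N → ℝ)
    (k : Fin N) (m : List (Fin N)) (hch : List.Chain E k (m ++ [k]))
    (hnd : (k :: m).Nodup) :
    ∃ c : Fin (m.length + 1 + 1) → Fin N, IsCycle E (m.length + 1) c ∧
      IsSimpleCycle (m.length + 1) c ∧
      (∏ i : Fin (m.length + 1), lam (c i.castSucc)) = ((k :: m).map lam).prod := by
  set q : List (Fin N) := k :: m with hq
  set full : List (Fin N) := q ++ [k] with hfull
  have hqlen : q.length = m.length + 1 := by simp [hq]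
  have hflen : full.length = m.length + 2 := by simp [hfull, hq]
  have hD : ∀ (i : ℕ) (hi : i < m.length + 2), full.getD i k = full[i]'(by omega) := by
    intro i hi; exact List.getD_eq_getElem _ _ (by omega)
  have hpre : ∀ (i : ℕ) (hi : i < m.length + 1), full[i]'(by omega) = q[i]'(by omega) := by
    intro i hi
    exact List.getElem_append_left (by omega)
  refine ⟨fun i => full.getD (i : ℕ) k, ?_, ?_, ?_⟩
  · constructor
    · -- c last = c 0
      have h0 : full.getD 0 k = k := by
        rw [hD 0 (by omega), hpre 0 (by omega)]; rfl
      have hl : full.getD (m.length + 1) k = k := by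
        have h : full.getD (m.length + 1) k = [k].getD (m.length + 1 - q.length) k :=
          List.getD_append_right q [k] k (m.length + 1) (by omega)
        rw [h, hqlen]
        simp
      simpa [Fin.last] using hl.trans h0.symm
    · intro i
      have hget := List.isChain_iff_getElem.1 (show List.Chain' E full from hch)
      have hi : (i : ℕ) + 1 < full.length := by omega
      have h := hget i hi
      show E (full.getD ((i.castSucc : Fin (m.length + 2)) : ℕ) k)
        (full.getD ((i.succ : Fin (m.length + 2)) : ℕ) k)
      rw [Fin.coe_castSucc, Fin.val_succ, hD (i : ℕ) (by omega), hD ((i : ℕ) + 1) (by omega)]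
      convert h using 2
  · intro i j hij
    simp only [Fin.coe_castSucc] at hij
    rw [hD ((i : Fin (m.length + 1)) : ℕ) (by omega), hD ((j : Fin (m.length + 1)) : ℕ) (by omega),
      hpre ((i : Fin (m.length + 1)) : ℕ) (by omega), hpre ((j : Fin (m.length + 1)) : ℕ) (by omega)] at hij
    exact Fin.ext ((hnd.getElem_inj_iff).1 hij)
  · have hmap : (q.map lam).prod = ∏ i : Fin (m.length + 1), lam (q[(i : ℕ)]'(by omega)) := by
      conv_lhs => rw [← List.ofFn_getElem (xs := q), List.map_ofFn]
      rw [List.prod_ofFn]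
      exact Finset.prod_congr rfl (fun i _ => rfl)
    rw [hmap]
    refine Finset.prod_congr rfl (fun i _ => ?_)
    show lam (full.getD ((i.castSucc : Fin (m.length + 2)) : ℕ) k) = _
    rw [Fin.coe_castSucc, hD _ (by omega), hpre _ (by omega)]

private lemma exists_expansion_weights {N : ℕ} (E : Fin N → Fin N → Prop) (lam : Fin N → ℝ)
    (hlam0 : ∀ k, 0 ≤ lam k)
    (hsc : ∀ k j : Fin N, Relation.ReflTransGen E k j)
    (hcyc : ∀ n : ℕ, 1 ≤ n → ∀ c : Fin (n + 1) → Fin N,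
        IsCycle E n c → IsSimpleCycle n c → 1 < ∏ i : Fin n, lam (c i.castSucc)) :
    ∃ L : ℝ, 1 < L ∧ ∃ w : Fin N → ℝ, (∀ k, 0 < w k) ∧
      ∀ k j, E k j → L * w k ≤ lam k * w j := by
  classical
  rcases Nat.eq_zero_or_pos N with rfl | hN
  · exact ⟨2, one_lt_two, fun _ => 1, fun k => k.elim0, fun k => k.elim0⟩
  set F : (n : ℕ) → Finset ℝ := fun n =>
    (Finset.univ.filter (fun c : Fin (n + 1 + 1) → Fin N =>
        IsCycle E (n + 1) c ∧ IsSimpleCycle (n + 1) c)).image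
      (fun c => ∏ i : Fin (n + 1), lam (c i.castSucc)) with hF
  set allP : Finset ℝ := (Finset.range N).biUnion F with hallP
  have hallP_gt : ∀ y ∈ allP, 1 < y := by
    intro y hy
    rw [hallP, Finset.mem_biUnion] at hy
    obtain ⟨n, -, hy⟩ := hy
    rw [hF] at hy
    simp only [Finset.mem_image, Finset.mem_filter] at hy
    obtain ⟨c, ⟨-, h1, h2⟩, rfl⟩ := hy
    exact hcyc (n + 1) (by omega) c h1 h2
  set Y : ℝ := if h : allP.Nonempty then allP.min' h else 2 with hY
  have hY1 : 1 < Y := by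
    rw [hY]; split_ifs with h
    · exact hallP_gt _ (allP.min'_mem h)
    · norm_num
  set L : ℝ := Y ^ ((N : ℝ)⁻¹) with hL
  have hL1 : 1 < L := by
    rw [hL, Real.one_lt_rpow_iff_of_pos (by linarith)]
    exact Or.inl ⟨hY1, by positivity⟩
  have hLN : L ^ N = Y := by
    rw [hL]; exact Real.rpow_inv_natCast_pow (by linarith) (by omega)
  have hL0 : (0:ℝ) < L := by linarith
  have hkey : ∀ (k : Fin N) (m : List (Fin N)), List.Chain E k (m ++ [k]) →
      (k :: m).Nodup → L ^ (k :: m).length ≤ ((k :: m).map lam).prod := by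
    intro k m hch hnd
    obtain ⟨c, hc1, hc2, hc3⟩ := listCycle_encode lam k m hch hnd
    have hlen : (k :: m).length ≤ N := by simpa using hnd.length_le_card
    have hmem : ((k :: m).map lam).prod ∈ allP := by
      rw [← hc3, hallP, Finset.mem_biUnion]
      refine ⟨m.length, Finset.mem_range.2 (by simp only [List.length_cons] at hlen; omega), ?_⟩
      rw [hF]
      exact Finset.mem_image.2 ⟨c, Finset.mem_filter.2 ⟨Finset.mem_univ _, hc1, hc2⟩, rfl⟩
    have hYle : Y ≤ ((k :: m).map lam).prod := by
      rw [hY, dif_pos ⟨_, hmem⟩]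
      exact Finset.min'_le _ _ hmem
    calc L ^ (k :: m).length ≤ L ^ N := pow_le_pow_right₀ hL1.le hlen
      _ = Y := hLN
      _ ≤ _ := hYle
  have hlampos : ∀ k j : Fin N, E k j → 0 < lam k := by
    intro k j hkj
    have hwalk : ∃ m, List.Chain E k (m ++ [k]) := by
      rcases eq_or_ne j k with rfl | hne
      · exact ⟨[], by simpa using List.Chain.cons hkj List.Chain.nil⟩
      · rcases rtg_walk (hsc j k) with rfl | ⟨m, hm⟩
        · exact absurd rfl hne
        · exact ⟨j :: m, List.chain_cons.2 ⟨hkj, hm⟩⟩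
    obtain ⟨m, hm⟩ := hwalk
    obtain ⟨m', hm', hnd'⟩ := cycle_shorten m.length k m le_rfl hm
    have h := hkey k m' hm' hnd'
    rcases (hlam0 k).lt_or_eq with h0 | h0
    · exact h0
    · exfalso
      have hz : ((k :: m').map lam).prod = 0 := by simp [← h0]
      rw [hz] at h
      have : (0:ℝ) < L ^ (k :: m').length := pow_pos hL0 _
      linarith
  set f : Fin N → ℝ := fun i => lam i / L with hf
  have hf0 : ∀ i, 0 ≤ f i := fun i => div_nonneg (hlam0 i) hL0.le
  have hcycf : ∀ (k : Fin N) (m : List (Fin N)), List.Chain E k (m ++ [k]) →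
      (k :: m).Nodup → 1 ≤ ((k :: m).map f).prod := by
    intro k m hch hnd
    rw [hf, prod_map_div, le_div_iff₀ (pow_pos hL0 _), one_mul]
    exact hkey k m hch hnd
  set P : Fin N → List (Fin N) → ℝ := fun k l => (((k :: l).dropLast).map f).prod with hP
  set SPset : Fin N → Set (List (Fin N)) :=
    fun k => {l | List.Chain E k l ∧ (k :: l).Nodup} with hSP
  have hPnn : ∀ k l, 0 ≤ P k l := by
    intro k l
    apply List.prod_nonneg
    intro a ha
    obtain ⟨x, -, rfl⟩ := List.mem_map.1 ha
    exact hf0 x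
  have hSfin : ∀ k, (SPset k).Finite := by
    intro k
    have h1 : Finite {l : List (Fin N) // l.Nodup} := inferInstance
    have h2 : {l : List (Fin N) | l.Nodup}.Finite := Set.finite_coe_iff.mp h1
    refine h2.subset ?_
    intro l hl
    exact (List.nodup_cons.1 hl.2).2
  have hSne : ∀ k, ([] : List (Fin N)) ∈ SPset k := by
    intro k
    exact ⟨List.Chain.nil, by simp⟩
  set w : Fin N → ℝ := fun k => sInf (P k '' SPset k) with hw
  have hbdd : ∀ k, BddBelow (P k '' SPset k) := by
    intro k
    refine ⟨0, fun x hx => ?_⟩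
    obtain ⟨l, -, rfl⟩ := hx
    exact hPnn k l
  have hvne : ∀ k, (P k '' SPset k).Nonempty := fun k => ⟨P k [], Set.mem_image_of_mem _ (hSne k)⟩
  have hwle : ∀ k l, l ∈ SPset k → w k ≤ P k l := by
    intro k l hl
    exact csInf_le (hbdd k) (Set.mem_image_of_mem _ hl)
  have hwpos : ∀ k, 0 < w k := by
    intro k
    have hmem : w k ∈ P k '' SPset k :=
      Set.Nonempty.csInf_mem (hvne k) ((hSfin k).image _)
    obtain ⟨l, ⟨hch, hnd⟩, hPl⟩ := hmem
    rw [← hPl]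
    apply List.prod_pos
    intro a ha
    obtain ⟨x, hx, rfl⟩ := List.mem_map.1 ha
    obtain ⟨y, hxy⟩ := chain'_exists_succ (k :: l) hch x hx
    exact div_pos (hlampos x y hxy) hL0
  have hstep : ∀ k j, E k j → ∀ l ∈ SPset j, w k ≤ f k * P j l := by
    intro k j hkj l hl
    obtain ⟨hch, hnd⟩ := hl
    by_cases hk : k ∈ j :: l
    · obtain ⟨s, t, hst⟩ := List.append_of_mem hk
      have hchain' : List.Chain' E (s ++ k :: t) := hst ▸ (hch : List.Chain' E (j :: l))
      have hct : List.Chain E k t := (List.isChain_split.1 hchain').2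
      have hndst : (s ++ k :: t).Nodup := hst ▸ hnd
      have hndkt : (k :: t).Nodup := hndst.of_append_right
      have hcycChain : List.Chain E k (s ++ [k]) := by
        cases s with
        | nil =>
          have hjk : j = k := by
            have := congrArg List.head? hst
            simpa using this
          subst hjk
          simpa using List.Chain.cons hkj List.Chain.nil
        | cons a s' =>
          have haj : j = a := by
            have := congrArg List.head? hst
            simpa using this
          subst haj
          refine List.chain_cons.2 ⟨hkj, ?_⟩
          have h1 : List.Chain' E ((j :: s') ++ [k]) := (List.isChain_split.1 hchain').1
          have h2 : List.Chain' E (j :: (s' ++ [k])) := by simpa using h1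
          exact h2
      have hndks : (k :: s).Nodup := by
        refine List.nodup_cons.2 ⟨?_, List.Nodup.of_append_left hndst⟩
        intro hks
        exact List.disjoint_of_nodup_append hndst hks (by simp)
      have hc1 : 1 ≤ ((k :: s).map f).prod := hcycf k s hcycChain hndks
      have hdrop : (j :: l).dropLast = s ++ (k :: t).dropLast := by
        rw [hst, List.dropLast_append]
        simp
      have hPformula : P j l = (s.map f).prod * P k t := by
        show (((j :: l).dropLast).map f).prod = _
        rw [hdrop, List.map_append, List.prod_append]
      have hwkt : w k ≤ P k t := hwle k t ⟨hct, hndkt⟩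
      calc w k ≤ P k t := hwkt
        _ = 1 * P k t := (one_mul _).symm
        _ ≤ ((k :: s).map f).prod * P k t :=
            mul_le_mul_of_nonneg_right hc1 (hPnn k t)
        _ = (f k * (s.map f).prod) * P k t := by rw [List.map_cons, List.prod_cons]
        _ = f k * P j l := by rw [hPformula]; ring
    · have hmem : (j :: l) ∈ SPset k := by
        refine ⟨List.chain_cons.2 ⟨hkj, hch⟩, List.nodup_cons.2 ⟨hk, hnd⟩⟩
      have h1 : w k ≤ P k (j :: l) := hwle k (j :: l) hmem
      have h2 : P k (j :: l) = f k * P j l := by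
        show (((k :: j :: l).dropLast).map f).prod = _
        rw [List.dropLast_cons₂, List.map_cons, List.prod_cons]
      rw [h2] at h1
      exact h1
  refine ⟨L, hL1, w, hwpos, ?_⟩
  intro k j hkj
  have hfk : 0 < f k := div_pos (hlampos k j hkj) hL0
  have h1 : w k / f k ≤ w j := by
    refine le_csInf (hvne j) ?_
    intro b hb
    obtain ⟨l, hl, rfl⟩ := hb
    rw [div_le_iff₀ hfk]
    calc w k ≤ f k * P j l := hstep k j hkj l hl
      _ = P j l * f k := mul_comm _ _
  have h2 : w k ≤ f k * w j := by
    rw [div_le_iff₀ hfk] at h1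
    calc w k ≤ w j * f k := h1
      _ = f k * w j := mul_comm _ _
  have h3 : w k ≤ lam k / L * w j := h2
  have h4 := mul_le_mul_of_nonneg_left h3 hL0.le
  calc L * w k ≤ L * (lam k / L * w j) := h4
    _ = lam k * w j := by field_simp


private lemma exists_analytic_approx (K : Set ℂ) (hK : IsCompact K) (f : ℂ → ℝ)
    (hf : Continuous f) (ε : ℝ) (hε : 0 < ε) :
    ∃ g : ℂ → ℝ, ContDiff ℝ (⊤ : ℕ∞) g ∧ ∀ x ∈ K, |g x - f x| ≤ ε := by
  haveI : CompactSpace K := isCompact_iff_compactSpace.mp hK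
  set reK : C(K, ℝ) := ⟨fun x => (x : ℂ).re, Complex.continuous_re.comp continuous_subtype_val⟩
    with hreK
  set imK : C(K, ℝ) := ⟨fun x => (x : ℂ).im, Complex.continuous_im.comp continuous_subtype_val⟩
    with himK
  set A : Subalgebra ℝ C(K, ℝ) := Algebra.adjoin ℝ {reK, imK} with hA
  have hsep : A.SeparatesPoints := by
    intro x y hxy
    have hne : (x : ℂ) ≠ (y : ℂ) := fun h => hxy (Subtype.coe_injective h)
    by_cases hre : (x : ℂ).re = (y : ℂ).re
    · have him : (x : ℂ).im ≠ (y : ℂ).im := fun h => hne (Complex.ext hre h)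
      exact ⟨imK, ⟨imK, Algebra.subset_adjoin (by simp), rfl⟩, him⟩
    · exact ⟨reK, ⟨reK, Algebra.subset_adjoin (by simp), rfl⟩, hre⟩
  obtain ⟨⟨g, hgA⟩, hg⟩ := ContinuousMap.exists_mem_subalgebra_near_continuous_of_separatesPoints
    A hsep (fun x => f x) (hf.comp continuous_subtype_val) ε hε
  have hext0 : ∀ h : C(K, ℝ), h ∈ A → ∃ G : ℂ → ℝ, ContDiff ℝ (⊤ : ℕ∞) G ∧ ∀ x : K, G x = h x := by
    intro h hh
    rw [hA] at hh
    induction hh using Algebra.adjoin_induction with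
    | mem h hh =>
      rcases hh with rfl | rfl
      · exact ⟨Complex.re, Complex.reCLM.contDiff, fun x => rfl⟩
      · exact ⟨Complex.im, Complex.imCLM.contDiff, fun x => rfl⟩
    | algebraMap r => exact ⟨fun _ => r, contDiff_const, fun x => rfl⟩
    | add x y hx hy ihx ihy =>
      obtain ⟨G1, hG1, hG1v⟩ := ihx
      obtain ⟨G2, hG2, hG2v⟩ := ihy
      exact ⟨G1 + G2, hG1.add hG2, fun z => by
        simp [hG1v z, hG2v z]⟩
    | mul x y hx hy ihx ihy =>
      obtain ⟨G1, hG1, hG1v⟩ := ihx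
      obtain ⟨G2, hG2, hG2v⟩ := ihy
      exact ⟨G1 * G2, hG1.mul hG2, fun z => by
        simp [hG1v z, hG2v z]⟩
  obtain ⟨G, hGc, hGv⟩ := hext0 g hgA
  refine ⟨G, hGc, fun x hx => ?_⟩
  have := hg ⟨x, hx⟩
  rw [Real.norm_eq_abs] at this
  have hGx : G x = g ⟨x, hx⟩ := hGv ⟨x, hx⟩
  rw [hGx]
  exact this.le

private lemma isBox_closed {S : Set ℂ} (h : IsBox S) : IsClosed S := by
  obtain ⟨a, b, c, d, -, -, rfl⟩ := h
  have : {z : ℂ | z.re ∈ Set.Icc a b ∧ z.im ∈ Set.Icc c d}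
      = Complex.re ⁻¹' Set.Icc a b ∩ Complex.im ⁻¹' Set.Icc c d := rfl
  rw [this]
  exact (isClosed_Icc.preimage Complex.continuous_re).inter
    (isClosed_Icc.preimage Complex.continuous_im)

private lemma isBox_nonempty {S : Set ℂ} (h : IsBox S) : S.Nonempty := by
  obtain ⟨a, b, c, d, hab, hcd, rfl⟩ := h
  exact ⟨⟨a, c⟩, ⟨⟨le_rfl, hab.le⟩, ⟨le_rfl, hcd.le⟩⟩⟩

private lemma isBox_compact {S : Set ℂ} (h : IsBox S) : IsCompact S := by
  refine Metric.isCompact_of_isClosed_isBounded (isBox_closed h) ?_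
  obtain ⟨a, b, c, d, hab, hcd, rfl⟩ := h
  rw [isBounded_iff_forall_norm_le]
  refine ⟨(|a| ⊔ |b|) + (|c| ⊔ |d|), ?_⟩
  rintro z ⟨⟨h1, h2⟩, ⟨h3, h4⟩⟩
  have hre : |z.re| ≤ |a| ⊔ |b| := abs_le.mpr
    ⟨by linarith [le_max_left |a| |b|, neg_abs_le a], by linarith [le_max_right |a| |b|, le_abs_self b]⟩
  have him : |z.im| ≤ |c| ⊔ |d| := abs_le.mpr
    ⟨by linarith [le_max_left |c| |d|, neg_abs_le c], by linarith [le_max_right |c| |d|, le_abs_self d]⟩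
  calc ‖z‖ ≤ |z.re| + |z.im| := Complex.norm_le_abs_re_add_abs_im z
    _ ≤ _ := add_le_add hre him

/-- If every simple cycle of a strongly connected box chain model has cycle
multiplier (with box multipliers `lam k = inf {|f'(z)| : z ∈ B k}`) exceeding
one, then the map is uniformly expanding on `𝓑 = ⋃ k, B k` in a smooth
conformal metric, hence hyperbolic. -/
theorem hyperbolic_of_simple_cycle_multipliers_gt_one
    (p : Polynomial ℂ) (hdeg : 1 < p.natDegree)
    (N : ℕ) (B : Fin N → Set ℂ)
    (hbox : ∀ k, IsBox (B k))
    (hdisj : ∀ k j, k ≠ j → interior (B k) ∩ interior (B j) = ∅)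
    (E : Fin N → Fin N → Prop)
    (δ : ℝ) (hδ : 0 < δ)
    (hedge : ∀ k j, (∃ z ∈ B k, Polynomial.eval z p ∈ Metric.thickening δ (B j)) → E k j)
    (hsc : ∀ k j : Fin N, Relation.ReflTransGen E k j)
    (lam : Fin N → ℝ)
    (hlam : ∀ k, lam k =
      sInf ((fun z => ‖Polynomial.eval z (Polynomial.derivative p)‖) '' B k))
    (hcyc : ∀ n : ℕ, 1 ≤ n → ∀ c : Fin (n + 1) → Fin N,
        IsCycle E n c → IsSimpleCycle n c → 1 < ∏ i : Fin n, lam (c i.castSucc)) :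
    ∃ L : ℝ, 1 < L ∧
      ∃ ρ : ℂ → ℝ, ContDiff ℝ (⊤ : ℕ∞) ρ ∧
        (∀ z ∈ ⋃ k, B k, 0 < ρ z) ∧
        (∀ z ∈ ⋃ k, B k, Polynomial.eval z p ∈ ⋃ k, B k →
          ρ (Polynomial.eval z p) * ‖Polynomial.eval z (Polynomial.derivative p)‖
            ≥ L * ρ z) := by
  classical
  rcases Nat.eq_zero_or_pos N with rfl | hN
  · refine ⟨2, one_lt_two, fun _ => 1, contDiff_const, ?_, ?_⟩ <;>
      · intro z hz
        rw [Set.iUnion_of_empty] at hz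
        exact absurd hz (Set.notMem_empty z)
  -- basic facts about lam
  have hlam0 : ∀ k, 0 ≤ lam k := by
    intro k
    rw [hlam k]
    apply Real.sInf_nonneg
    rintro x ⟨z, -, rfl⟩
    exact norm_nonneg _
  have hlamle : ∀ (k : Fin N) (z : ℂ), z ∈ B k →
      lam k ≤ ‖Polynomial.eval z (Polynomial.derivative p)‖ := by
    intro k z hz
    rw [hlam k]
    refine csInf_le ⟨0, ?_⟩ ⟨z, hz, rfl⟩
    rintro x ⟨z', -, rfl⟩
    exact norm_nonneg _
  -- the weights
  obtain ⟨L, hL1, w, hwpos, hedgew⟩ := exists_expansion_weights E lam hlam0 hsc hcyc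
  -- sorted list of values of w
  set vl : List ℝ := (Finset.image w Finset.univ).sort (· ≤ ·) with hvl
  have hvl_nd : vl.Nodup := (Finset.image w Finset.univ).sort_nodup _
  have hvl_sorted : vl.Pairwise (· < ·) :=
    (((Finset.image w Finset.univ).pairwise_sort _).and hvl_nd).imp fun h => lt_of_le_of_ne h.1 h.2
  have hvl_mem : ∀ x, x ∈ vl ↔ x ∈ Finset.image w Finset.univ :=
    fun x => Finset.mem_sort _
  set M : ℕ := vl.length with hM
  set v : ℕ → ℝ := fun i => vl.getD i 0 with hv
  have hvw : ∀ k : Fin N, ∃ t, t < M ∧ v t = w k := by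
    intro k
    have hmem : w k ∈ vl := (hvl_mem _).2 (Finset.mem_image_of_mem w (Finset.mem_univ k))
    obtain ⟨t, ht, hvt⟩ := List.mem_iff_getElem.1 hmem
    exact ⟨t, ht, by
      show vl.getD t 0 = w k
      rw [List.getD_eq_getElem _ _ ht]; exact hvt⟩
  have hMpos : 0 < M := by
    obtain ⟨t, ht, -⟩ := hvw ⟨0, hN⟩
    omega
  have hvstrict : ∀ i j, i < j → j < M → v i < v j := by
    intro i j hij hj
    have h := List.pairwise_iff_get.1 hvl_sorted ⟨i, by omega⟩ ⟨j, hj⟩ hij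
    simp only [List.get_eq_getElem] at h
    show vl.getD i 0 < vl.getD j 0
    rw [List.getD_eq_getElem _ _ (by omega : i < vl.length),
      List.getD_eq_getElem _ _ (by omega : j < vl.length)]
    exact h
  have hvmono : ∀ i j, i ≤ j → j < M → v i ≤ v j := by
    intro i j hij hj
    rcases eq_or_lt_of_le hij with rfl | h
    · exact le_rfl
    · exact (hvstrict i j h hj).le
  have hvpos : ∀ i, i < M → 0 < v i := by
    intro i hi
    have hmem : v i ∈ vl := by
      show vl.getD i 0 ∈ vl
      rw [List.getD_eq_getElem _ _ hi]
      exact List.getElem_mem _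
    rw [hvl_mem] at hmem
    obtain ⟨k, -, hk⟩ := Finset.mem_image.1 hmem
    rw [← hk]
    exact hwpos k
  -- the continuous step functions
  have hchi : ∀ i : ℕ, ∃ χ : ℂ → ℝ, Continuous χ ∧
      (∀ z ∈ (⋃ (k : Fin N) (_ : w k ≤ v i), B k), χ z = 0) ∧
      (∀ z ∈ (⋂ (j : Fin N) (_ : w j ≤ v i), (Metric.thickening δ (B j))ᶜ), χ z = 1) ∧
      (∀ z, χ z ∈ Set.Icc (0:ℝ) 1) := by
    intro i
    have hA : IsClosed (⋃ (k : Fin N) (_ : w k ≤ v i), B k) :=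
      isClosed_iUnion_of_finite fun k =>
        isClosed_iUnion_of_finite fun _ => isBox_closed (hbox k)
    have hV : IsClosed (⋂ (j : Fin N) (_ : w j ≤ v i), (Metric.thickening δ (B j))ᶜ) :=
      isClosed_iInter fun j => isClosed_iInter fun _ =>
        Metric.isOpen_thickening.isClosed_compl
    have hdisj2 : Disjoint (⋃ (k : Fin N) (_ : w k ≤ v i), B k)
        (⋂ (j : Fin N) (_ : w j ≤ v i), (Metric.thickening δ (B j))ᶜ) := by
      rw [Set.disjoint_left]
      intro z hz hz'
      obtain ⟨k, hwk, hzk⟩ := Set.mem_iUnion₂.1 hz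
      have h1 : z ∈ Metric.thickening δ (B k) := Metric.self_subset_thickening hδ _ hzk
      exact (Set.mem_iInter₂.1 hz' k hwk) h1
    obtain ⟨χ, hχ0, hχ1, hχm⟩ := exists_continuous_zero_one_of_isClosed hA hV hdisj2
    exact ⟨χ, χ.continuous, fun z hz => hχ0 hz, fun z hz => hχ1 hz, hχm⟩
  choose χ hχc hχ0 hχ1 hχm using hchi
  -- the continuous conformal factor
  set ρ0 : ℂ → ℝ := fun z => v 0 + ∑ i ∈ Finset.range (M - 1), (v (i + 1) - v i) * χ i z
    with hρ0
  have hρ0c : Continuous ρ0 := by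
    apply continuous_const.add
    exact continuous_finset_sum _ fun i _ => continuous_const.mul (hχc i)
  have hgap : ∀ i, i + 1 < M → 0 ≤ v (i + 1) - v i := by
    intro i hi
    have := hvmono i (i + 1) (by omega) hi
    linarith
  -- lower bound: ρ0 ≥ v 0 everywhere
  have hρ0lb : ∀ z, v 0 ≤ ρ0 z := by
    intro z
    have : (0:ℝ) ≤ ∑ i ∈ Finset.range (M - 1), (v (i + 1) - v i) * χ i z := by
      apply Finset.sum_nonneg
      intro i hi
      rw [Finset.mem_range] at hi
      exact mul_nonneg (hgap i (by omega)) (hχm i z).1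
    show v 0 ≤ v 0 + ∑ i ∈ Finset.range (M - 1), (v (i + 1) - v i) * χ i z
    linarith
  -- upper bound at points of a box
  have hupper : ∀ (z : ℂ) (k0 : Fin N), z ∈ B k0 → (∀ k, z ∈ B k → w k ≤ w k0) →
      ρ0 z ≤ w k0 := by
    intro z k0 hz hmax
    obtain ⟨t, htM, hvt⟩ := hvw k0
    have hterm : ∀ i ∈ Finset.range (M - 1),
        (v (i + 1) - v i) * χ i z ≤ if i < t then v (i + 1) - v i else 0 := by
      intro i hi
      rw [Finset.mem_range] at hi
      by_cases hit : i < t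
      · rw [if_pos hit]
        have h1 := (hχm i z).2
        have h2 := (hχm i z).1
        nlinarith [hgap i (by omega)]
      · rw [if_neg hit]
        have hzero : χ i z = 0 := by
          apply hχ0 i z
          apply Set.mem_iUnion₂.2
          exact ⟨k0, by rw [← hvt]; exact hvmono t i (by omega) (by omega), hz⟩
        rw [hzero, mul_zero]
    have hsum : ∑ i ∈ Finset.range (M - 1), (v (i + 1) - v i) * χ i z ≤ v t - v 0 := by
      calc ∑ i ∈ Finset.range (M - 1), (v (i + 1) - v i) * χ i z
          ≤ ∑ i ∈ Finset.range (M - 1), (if i < t then v (i + 1) - v i else 0) :=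
            Finset.sum_le_sum hterm
        _ = ∑ i ∈ (Finset.range (M - 1)).filter (· < t), (v (i + 1) - v i) := by
            rw [Finset.sum_filter]
        _ = ∑ i ∈ Finset.range t, (v (i + 1) - v i) := by
            congr 1
            ext i
            simp only [Finset.mem_filter, Finset.mem_range]
            omega
        _ = v t - v 0 := Finset.sum_range_sub v t
    show v 0 + ∑ i ∈ Finset.range (M - 1), (v (i + 1) - v i) * χ i z ≤ w k0
    rw [← hvt]
    linarith
  -- lower bound at points δ-close to a box
  have hlower : ∀ (z : ℂ) (j0 : Fin N), z ∈ Metric.thickening δ (B j0) →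
      (∀ j, z ∈ Metric.thickening δ (B j) → w j0 ≤ w j) → w j0 ≤ ρ0 z := by
    intro z j0 hz hmin
    obtain ⟨t, htM, hvt⟩ := hvw j0
    have hterm : ∀ i ∈ Finset.range (M - 1),
        (if i < t then v (i + 1) - v i else 0) ≤ (v (i + 1) - v i) * χ i z := by
      intro i hi
      rw [Finset.mem_range] at hi
      by_cases hit : i < t
      · rw [if_pos hit]
        have hone : χ i z = 1 := by
          apply hχ1 i z
          apply Set.mem_iInter₂.2
          intro j hwj
          simp only [Set.mem_compl_iff]
          intro hthick
          have h1 : w j0 ≤ w j := hmin j hthick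
          have h2 : v i < v t := hvstrict i t hit htM
          rw [hvt] at h2
          linarith
        rw [hone, mul_one]
      · rw [if_neg hit]
        exact mul_nonneg (hgap i (by omega)) (hχm i z).1
    have hsum : v t - v 0 ≤ ∑ i ∈ Finset.range (M - 1), (v (i + 1) - v i) * χ i z := by
      calc v t - v 0 = ∑ i ∈ Finset.range t, (v (i + 1) - v i) :=
            (Finset.sum_range_sub v t).symm
        _ = ∑ i ∈ (Finset.range (M - 1)).filter (· < t), (v (i + 1) - v i) := by
            congr 1
            ext i
            simp only [Finset.mem_filter, Finset.mem_range]
            omega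
        _ = ∑ i ∈ Finset.range (M - 1), (if i < t then v (i + 1) - v i else 0) := by
            rw [Finset.sum_filter]
        _ ≤ _ := Finset.sum_le_sum hterm
    show w j0 ≤ v 0 + ∑ i ∈ Finset.range (M - 1), (v (i + 1) - v i) * χ i z
    rw [← hvt]
    linarith
  -- compactness of the union of boxes
  have hBcomp : IsCompact (⋃ k, B k) := isCompact_iUnion fun k => isBox_compact (hbox k)
  -- constants with slack
  set c : ℝ := (L - 1) / (2 * (L + 1)) with hc
  have hceq : c * (2 * (L + 1)) = L - 1 := by
    rw [hc]; field_simp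
  have hc0 : 0 < c := by rw [hc]; exact div_pos (by linarith) (by linarith)
  have hc2 : c < 1 / 2 := by
    rw [hc, div_lt_iff₀ (by linarith : (0:ℝ) < 2 * (L + 1))]
    ring_nf
    linarith
  have hc1 : c < 1 := by linarith
  set L' : ℝ := L * (1 - c) / (1 + c) with hL'
  have hid : L' * (1 + c) = L * (1 - c) := by
    rw [hL']; field_simp
  have hL'1 : 1 < L' := by
    rw [hL', lt_div_iff₀ (by linarith : (0:ℝ) < 1 + c)]
    linarith [hceq]
  have hv0pos : 0 < v 0 := hvpos 0 hMpos
  set ε : ℝ := c * v 0 with hε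
  have hεpos : 0 < ε := mul_pos hc0 hv0pos
  obtain ⟨ρ, hρc, hρapprox⟩ := exists_analytic_approx (⋃ k, B k) hBcomp ρ0 hρ0c ε hεpos
  have hv0le : ∀ k : Fin N, v 0 ≤ w k := by
    intro k
    obtain ⟨t, htM, hvt⟩ := hvw k
    rw [← hvt]
    exact hvmono 0 t (by omega) htM
  refine ⟨L', hL'1, ρ, hρc, ?_, ?_⟩
  · intro z hz
    have h1 := (abs_le.1 (hρapprox z hz)).1
    have h2 := hρ0lb z
    have h3 : 0 < (1 - c) * v 0 := mul_pos (by linarith) hv0pos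
    nlinarith
  · intro z hz hfz
    obtain ⟨k1, hk1⟩ := Set.mem_iUnion.1 hz
    have hfilne : (Finset.univ.filter (fun k : Fin N => z ∈ B k)).Nonempty :=
      ⟨k1, Finset.mem_filter.2 ⟨Finset.mem_univ _, hk1⟩⟩
    obtain ⟨k0, hk0mem, hk0max⟩ := Finset.exists_max_image _ w hfilne
    rw [Finset.mem_filter] at hk0mem
    have hzk0 : z ∈ B k0 := hk0mem.2
    have hk0max' : ∀ k, z ∈ B k → w k ≤ w k0 := fun k hk =>
      hk0max k (Finset.mem_filter.2 ⟨Finset.mem_univ _, hk⟩)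
    set fz : ℂ := Polynomial.eval z p with hfzdef
    obtain ⟨j1, hj1⟩ := Set.mem_iUnion.1 hfz
    have hfilne2 : (Finset.univ.filter
        (fun j : Fin N => fz ∈ Metric.thickening δ (B j))).Nonempty :=
      ⟨j1, Finset.mem_filter.2 ⟨Finset.mem_univ _, Metric.self_subset_thickening hδ _ hj1⟩⟩
    obtain ⟨j0, hj0mem, hj0min⟩ := Finset.exists_min_image _ w hfilne2
    rw [Finset.mem_filter] at hj0mem
    have hfzj0 : fz ∈ Metric.thickening δ (B j0) := hj0mem.2
    have hj0min' : ∀ j, fz ∈ Metric.thickening δ (B j) → w j0 ≤ w j := fun j hj =>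
      hj0min j (Finset.mem_filter.2 ⟨Finset.mem_univ _, hj⟩)
    have hE : E k0 j0 := hedge k0 j0 ⟨z, hzk0, hfzj0⟩
    have hLww : L * w k0 ≤ lam k0 * w j0 := hedgew k0 j0 hE
    have hup : ρ0 z ≤ w k0 := hupper z k0 hzk0 hk0max'
    have hlo : w j0 ≤ ρ0 fz := hlower fz j0 hfzj0 hj0min'
    have ha1 := abs_le.1 (hρapprox z hz)
    have ha2 := abs_le.1 (hρapprox fz hfz)
    set D : ℝ := ‖Polynomial.eval z (Polynomial.derivative p)‖ with hD
    have hDlam : lam k0 ≤ D := hlamle k0 z hzk0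
    have hD0 : 0 ≤ D := norm_nonneg _
    have hεk0 : ε ≤ c * w k0 := by
      rw [hε]; exact mul_le_mul_of_nonneg_left (hv0le k0) hc0.le
    have hεj0 : ε ≤ c * w j0 := by
      rw [hε]; exact mul_le_mul_of_nonneg_left (hv0le j0) hc0.le
    have hρz : ρ z ≤ (1 + c) * w k0 := by nlinarith [ha1.2]
    have hρfz : (1 - c) * w j0 ≤ ρ fz := by nlinarith [ha2.1]
    have hρfz0 : 0 ≤ ρ fz :=
      le_trans (mul_nonneg (by linarith) (hwpos j0).le) hρfz
    rw [ge_iff_le]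
    calc L' * ρ z ≤ L' * ((1 + c) * w k0) :=
          mul_le_mul_of_nonneg_left hρz (by linarith : (0:ℝ) ≤ L')
      _ = (1 - c) * (L * w k0) := by rw [← mul_assoc, hid]; ring
      _ ≤ (1 - c) * (lam k0 * w j0) :=
          mul_le_mul_of_nonneg_left hLww (by linarith)
      _ = ((1 - c) * w j0) * lam k0 := by ring
      _ ≤ ρ fz * D := mul_le_mul hρfz hDlam (hlam0 k0) hρfz0
end
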